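/- Let γ = 0.209 and define f_γ(x) = (1 − γ)x + γπ(1 − cos x)/2 for x ∈ [0, π]. Then for every x ∈ (0, π], (2/π) · f_γ(x) / (1 − cos x) ≥ 0.9035. (This is the bound ρ_1(0.209) ≥ 0.9035 used in the analysis of the SDP-based algorithm for undirected networks: it lower-bounds the ratio of the rounded contribution f_γ(x)/π of a self-loop to its SDP contribution (1 − cos x)/2.) -/
import Mathlib


/-- The Feige–Goemans rotation function
`f_γ(x) = (1 - γ)x + γπ(1 - cos x)/2`. -/
noncomputable def rotFun (γ x : ℝ) : ℝ :=
  (1 - γ) * x + γ * Real.pi * (1 - Real.cos x) / 2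

open Real intervalIntegral in
lemma sin_ge_cubic {y : ℝ} (hy : 0 ≤ y) : y - y^3/6 ≤ Real.sin y := by
  have h : ∫ u in (0:ℝ)..y, (1 - u^2/2) ≤ ∫ u in (0:ℝ)..y, Real.cos u := by
    apply intervalIntegral.integral_mono_on hy
    · exact (continuous_const.sub (continuous_pow 2 |>.div_const 2)).intervalIntegrable _ _
    · exact Real.continuous_cos.intervalIntegrable _ _
    · intro u _; exact Real.one_sub_sq_div_two_le_cos
  rw [integral_cos] at h
  have h2 : ∫ u in (0:ℝ)..y, (1 - u^2/2) = y - y^3/6 := by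
    rw [intervalIntegral.integral_sub (intervalIntegrable_const)
      ((continuous_pow 2 |>.div_const 2).intervalIntegrable _ _)]
    simp [intervalIntegral.integral_div, integral_pow]
    ring
  rw [h2] at h; simpa using h

open Real intervalIntegral in
lemma cos_le_quartic {t : ℝ} (ht : 0 ≤ t) : Real.cos t ≤ 1 - t^2/2 + t^4/24 := by
  have h : ∫ u in (0:ℝ)..t, (u - u^3/6) ≤ ∫ u in (0:ℝ)..t, Real.sin u := by
    apply intervalIntegral.integral_mono_on ht
    · exact (continuous_id.sub (continuous_pow 3 |>.div_const 6)).intervalIntegrable _ _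
    · exact Real.continuous_sin.intervalIntegrable _ _
    · intro u hu; exact sin_ge_cubic hu.1
  rw [integral_sin] at h
  have h2 : ∫ u in (0:ℝ)..t, (u - u^3/6) = t^2/2 - t^4/24 := by
    rw [intervalIntegral.integral_sub intervalIntegrable_id
      ((continuous_pow 3 |>.div_const 6).intervalIntegrable _ _)]
    simp [intervalIntegral.integral_div, integral_pow, integral_id]
    ring
  rw [h2] at h
  simp at h; linarith

lemma quartic_key {t : ℝ} (h0 : 0 ≤ t) (h1 : t ≤ 1.7016) :
    1.582 * 3.141592 - 1.582 * t - 0.6945 * 3.141593 * (2 - t^2/2 + t^4/24) ≥ 0 := by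
  nlinarith [sq_nonneg (t - 0.8154), sq_nonneg (t^2 - 0.665),
    mul_nonneg h0 (by linarith : (0:ℝ) ≤ 1.7016 - t), sq_nonneg t,
    mul_nonneg (mul_nonneg h0 h0) (by linarith : (0:ℝ) ≤ 1.7016 - t)]

/-- For `γ = 0.209`, the ratio `(2/π)·f_γ(x)/(1 - cos x)` is at least `0.9035` for all
`x ∈ (0, π]`: the bound `ρ₁(0.209) ≥ 0.9035` from the analysis of the SDP-based
algorithm for undirected networks. -/
theorem rho1_bound :
    ∀ x : ℝ, 0 < x → x ≤ Real.pi →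
      (2 / Real.pi) * rotFun 0.209 x / (1 - Real.cos x) ≥ 0.9035 := by
  intro x hx0 hxpi
  have hpi_lo : (3.141592 : ℝ) < Real.pi := by
    exact Real.pi_gt_d6
  have hpi_hi : Real.pi < 3.141593 := by
    exact Real.pi_lt_d6
  have hcos1 : Real.cos x < 1 := by
    have := Real.cos_lt_cos_of_nonneg_of_le_pi le_rfl hxpi hx0
    simpa using this
  -- Key inequality
  have key : 0.6945 * Real.pi * (1 - Real.cos x) ≤ 1.582 * x := by
    rcases le_or_gt x 1.44 with hc | hc
    · -- small x: 1 - cos x ≤ x²/2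
      have h1 : 1 - x^2/2 ≤ Real.cos x := Real.one_sub_sq_div_two_le_cos
      nlinarith [mul_nonneg hx0.le (by linarith : (0:ℝ) ≤ 1.44 - x)]
    · -- large x: substitute t = π - x
      set t : ℝ := Real.pi - x with ht_def
      have ht0 : 0 ≤ t := by simp [ht_def]; linarith
      have ht1 : t ≤ 1.7016 := by simp [ht_def]; linarith
      have hcx : Real.cos x = -Real.cos t := by
        rw [ht_def, Real.cos_pi_sub]; ring
      have hq := cos_le_quartic ht0
      have hpos : (0:ℝ) ≤ 2 - t^2/2 + t^4/24 := by nlinarith [sq_nonneg t, sq_nonneg (t^2)]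
      have h3 : 0.6945 * Real.pi * (1 + Real.cos t)
          ≤ 0.6945 * 3.141593 * (2 - t^2/2 + t^4/24) := by
        have := Real.pi_pos
        nlinarith [hq, hpos, hpi_hi]
      have h4 := quartic_key ht0 ht1
      have hx_eq : x = Real.pi - t := by simp [ht_def]
      rw [hcx, hx_eq]
      nlinarith [h3, h4, hpi_lo]
  -- Conclude
  have hden : (0:ℝ) < 1 - Real.cos x := by linarith
  have hpi : (0:ℝ) < Real.pi := Real.pi_pos
  rw [ge_iff_le, le_div_iff₀ hden]
  unfold rotFun
  rw [div_mul_eq_mul_div, le_div_iff₀ hpi]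
  nlinarith [key, hpi, hden]
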